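/- (Upper bound on the speed of convergence, λ > 0) Let c be α-Hölder continuous on ℝ^d × ℝ^d with α ∈ (0,1], and assume v_∞ ≥ 1+λ for some λ > 0. Then v_p − v_∞ ≤ O(e^{−βp}) as p → ∞, with β = min{α, log(1+λ)}; that is, there exist B > 0 and p_0 ≥ 1 such that v_p − v_∞ ≤ B·e^{−βp} for all p ≥ p_0. -/

import Mathlib

/-!
Take a coupling `γ` that is `e^{-αp}`-optimal for `J_∞` and replace it, on each pair of cubes of
side `h = e^{-p}`, by `μ ⊗ ν` rescaled to carry the same mass. The result is still a coupling. By
Hölder continuity it is concentrated where `c ≤ v_∞ + O(e^{-αp})`, and its density is at most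
`1 / ν(cube)`, so its entropy is at most the Shannon entropy of the cube masses of `ν`, which is
`O(p)`. Finally, for `a ≥ 1 + λ` Bernoulli's inequality gives
`(a^p + E)^{1/p} ≤ a + E / (p (1 + λ)^{p-1})`, which is `a + O((1 + λ)^{-p})` when `E = O(p)`.
-/

open MeasureTheory ENNReal Filter
open scoped Classical

noncomputable section

/-- ℝ^d with its Euclidean structure. -/
abbrev Rd (d : ℕ) := EuclideanSpace ℝ (Fin d)

/-- γ ∈ Π(μ,ν): γ has first marginal μ and second marginal ν. -/
def IsCoupling {E F : Type*} [MeasurableSpace E] [MeasurableSpace F]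
    (γ : Measure (E × F)) (μ : Measure E) (ν : Measure F) : Prop :=
  γ.map Prod.fst = μ ∧ γ.map Prod.snd = ν

/-- Relative entropy H(γ|ρ) = ∫ log(dγ/dρ) dγ if γ ≪ ρ (and the integral exists), +∞ otherwise. -/
def relEntropy {E : Type*} [MeasurableSpace E] (γ ρ : Measure E) : ℝ≥0∞ :=
  if γ ≪ ρ ∧ Integrable (llr γ ρ) γ then ENNReal.ofReal (∫ z, llr γ ρ z ∂γ) else ∞

/-- The entropic functional J_{p,ε}(γ) = (∫ c^p dγ + ε H(γ|μ⊗ν))^{1/p} on Π(μ,ν), +∞ outside. -/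
def Jpe {d : ℕ} (c : Rd d × Rd d → ℝ) (μ ν : Measure (Rd d)) (p ε : ℝ)
    (γ : Measure (Rd d × Rd d)) : ℝ≥0∞ :=
  if IsCoupling γ μ ν then
    (∫⁻ z, ENNReal.ofReal (c z ^ p) ∂γ + ENNReal.ofReal ε * relEntropy γ (μ.prod ν)) ^ (1 / p)
  else ∞

/-- The supremal functional J_∞(γ) = γ-ess sup c on Π(μ,ν), +∞ outside. -/
def Jinf {d : ℕ} (c : Rd d × Rd d → ℝ) (μ ν : Measure (Rd d))
    (γ : Measure (Rd d × Rd d)) : ℝ≥0∞ :=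
  if IsCoupling γ μ ν then essSup (fun z => ENNReal.ofReal (c z)) γ else ∞

/-- Weak-star convergence of a family of (probability) measures, as the real parameter p → ∞. -/
def WeakStarTendsto {E : Type*} [MeasurableSpace E] [TopologicalSpace E]
    (γ : ℝ → Measure E) (γ₀ : Measure E) : Prop :=
  ∀ f : BoundedContinuousFunction E ℝ,
    Tendsto (fun p => ∫ z, f z ∂(γ p)) atTop (nhds (∫ z, f z ∂γ₀))

/-- The support of a Borel measure: points all of whose neighborhoods have positive measure. -/
def msupport {E : Type*} [MeasurableSpace E] [TopologicalSpace E] (μ : Measure E) : Set E :=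
  {x | ∀ U ∈ nhds x, μ U ≠ 0}

/-- v_p := min_{γ ∈ Π(μ,ν)} J_p(γ), with J_p = J_{p,1}. -/
def vP {d : ℕ} (c : Rd d × Rd d → ℝ) (μ ν : Measure (Rd d)) (p : ℝ) : ℝ≥0∞ :=
  ⨅ (γ : Measure (Rd d × Rd d)) (_ : IsProbabilityMeasure γ) (_ : IsCoupling γ μ ν),
    Jpe c μ ν p 1 γ

/-- v_∞ := min_{γ ∈ Π(μ,ν)} J_∞(γ). -/
def vInfty {d : ℕ} (c : Rd d × Rd d → ℝ) (μ ν : Measure (Rd d)) : ℝ≥0∞ :=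
  ⨅ (γ : Measure (Rd d × Rd d)) (_ : IsProbabilityMeasure γ) (_ : IsCoupling γ μ ν),
    Jinf c μ ν γ

lemma Real.sum_negMulLog_le_log_card_add_one {ι : Type*} (S : Finset ι) (v : ι → ℝ)
    (hv0 : ∀ i ∈ S, 0 ≤ v i) (hv1 : ∑ i ∈ S, v i ≤ 1) :
    ∑ i ∈ S, Real.negMulLog (v i) ≤ Real.log S.card + 1 := by
  rcases S.eq_empty_or_nonempty with rfl | hS
  · simp
  set n : ℝ := (S.card : ℝ)
  have hn : 1 ≤ n := Nat.one_le_cast.mpr hS.card_pos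
  -- `negMulLog (n v) ≤ 1 - n v`, expanded by `negMulLog_mul`
  have hterm : ∀ i ∈ S, Real.negMulLog (v i) ≤ 1 / n - v i + v i * Real.log n := by
    intro i hi
    have h := Real.negMulLog_le_one_sub_self (mul_nonneg (by positivity) (hv0 i hi) : 0 ≤ n * v i)
    rw [Real.negMulLog_mul, Real.negMulLog] at h
    refine le_of_mul_le_mul_left ?_ (by positivity : 0 < n)
    rw [mul_add, mul_sub, mul_one_div_cancel (by positivity)]
    linear_combination h
  have hsum0 : 0 ≤ ∑ i ∈ S, v i := Finset.sum_nonneg hv0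
  have hlog : 0 ≤ Real.log n := Real.log_nonneg hn
  calc ∑ i ∈ S, Real.negMulLog (v i) ≤ ∑ i ∈ S, (1 / n - v i + v i * Real.log n) :=
        Finset.sum_le_sum hterm
    _ = 1 - ∑ i ∈ S, v i + (∑ i ∈ S, v i) * Real.log n := by
        rw [Finset.sum_add_distrib, Finset.sum_sub_distrib, Finset.sum_const, ← Finset.sum_mul,
          nsmul_eq_mul, mul_one_div_cancel (by positivity)]
    _ ≤ Real.log n + 1 := by nlinarith

lemma Real.rpow_add_rpow_one_div_le {a b E p : ℝ} (hp : 1 ≤ p) (hE : 0 ≤ E) (hb : 0 < b)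
    (hba : b ≤ a) : (a ^ p + E) ^ (1 / p) ≤ a + E / (p * b ^ (p - 1)) := by
  have ha : 0 < a := hb.trans_le hba
  have hp0 : 0 < p := by linarith
  set x := E / (p * a ^ p) with hx_def
  have hx : 0 ≤ x := by positivity
  have hbern : a ^ p + E ≤ (a * (1 + x)) ^ p := by
    rw [Real.mul_rpow ha.le (by linarith)]
    calc a ^ p + E = a ^ p * (1 + p * x) := by rw [hx_def]; field_simp
      _ ≤ a ^ p * (1 + x) ^ p := mul_le_mul_of_nonneg_left
          (one_add_mul_self_le_rpow_one_add (by linarith) hp) (by positivity)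
  have hax : a * x ≤ E / (p * b ^ (p - 1)) := by
    have : a * x = E / (p * a ^ (p - 1)) := by
      rw [hx_def, Real.rpow_sub_one ha.ne']
      field_simp
    rw [this]
    gcongr
  calc (a ^ p + E) ^ (1 / p) ≤ a * (1 + x) := by
        rw [one_div, Real.rpow_inv_le_iff_of_pos (by positivity) (by positivity) hp0]
        exact hbern
    _ = a + a * x := by ring
    _ ≤ a + E / (p * b ^ (p - 1)) := by linarith

lemma Real.add_mul_div_mul_rpow_le {C D b β p : ℝ} (hC : 0 ≤ C) (hD : 0 ≤ D) (hb : 0 < b)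
    (hβ : β ≤ Real.log b) (hp : 1 ≤ p) :
    (C + D * p) / (p * b ^ (p - 1)) ≤ (C + D) * b * Real.exp (-β * p) := by
  have hp0 : 0 < p := by linarith
  calc (C + D * p) / (p * b ^ (p - 1)) = (C / p + D) * b * Real.exp (-(Real.log b * p)) := by
        rw [Real.rpow_sub_one hb.ne', Real.rpow_def_of_pos hb, Real.exp_neg]
        field_simp
    _ ≤ (C + D) * b * Real.exp (-β * p) := by
        gcongr
        · exact div_le_self hC hp
        · nlinarith

lemma Real.rpow_add_one_div_le_add_mul_exp {M C₁ C₂ D b α p : ℝ} (hb : 0 < b) (hbM : b ≤ M)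
    (hC₁ : 0 ≤ C₁) (hC₂ : 0 ≤ C₂) (hD : 0 ≤ D) (hp : 1 ≤ p) :
    ((M + C₂ * Real.exp (-(α * p))) ^ p + (C₁ + D * p)) ^ (1 / p) ≤
      M + (C₂ + (C₁ + D) * b) * Real.exp (-min α (Real.log b) * p) := by
  have hexp : Real.exp (-(α * p)) ≤ Real.exp (-min α (Real.log b) * p) :=
    Real.exp_le_exp.2 (by nlinarith [min_le_left α (Real.log b)])
  calc ((M + C₂ * Real.exp (-(α * p))) ^ p + (C₁ + D * p)) ^ (1 / p)
      ≤ M + C₂ * Real.exp (-(α * p)) + (C₁ + D * p) / (p * b ^ (p - 1)) :=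
        Real.rpow_add_rpow_one_div_le hp (by positivity) hb
          (hbM.trans (le_add_of_nonneg_right (by positivity)))
    _ ≤ M + C₂ * Real.exp (-min α (Real.log b) * p) +
          (C₁ + D) * b * Real.exp (-min α (Real.log b) * p) := by
        gcongr
        exact Real.add_mul_div_mul_rpow_le hC₁ hD hb (min_le_right _ _) hp
    _ = M + (C₂ + (C₁ + D) * b) * Real.exp (-min α (Real.log b) * p) := by ring

lemma MeasureTheory.ae_measure_preimage_singleton_ne_zero {α β : Type*} [MeasurableSpace α]
    [MeasurableSpace β] [Countable β] [MeasurableSingletonClass β] {μ : Measure α} {f : α → β} :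
    ∀ᵐ x ∂μ, μ (f ⁻¹' {f x}) ≠ 0 := by
  rw [ae_iff]
  simp only [ne_eq, not_not]
  change μ (f ⁻¹' {b | μ (f ⁻¹' {b}) = 0}) = 0
  exact (measure_preimage_eq_zero_iff_of_countable (Set.to_countable _)).2 fun _ hb => hb

lemma MeasureTheory.integrable_comp_of_ae_mem_finset {α β : Type*} [MeasurableSpace α]
    [MeasurableSpace β] [Countable β] [MeasurableSingletonClass β] {ρ : Measure α}
    [IsFiniteMeasure ρ] {g : α → β} (hg : Measurable g) (φ : β → ℝ) (S : Finset β)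
    (hS : ∀ᵐ x ∂ρ, g x ∈ S) : Integrable (fun x => φ (g x)) ρ := by
  refine .of_bound ((measurable_of_countable φ).comp hg).aestronglyMeasurable
    (∑ b ∈ S, ‖φ b‖) ?_
  filter_upwards [hS] with x hx
  exact Finset.single_le_sum (f := fun b => ‖φ b‖) (fun _ _ => norm_nonneg _) hx

lemma IsCoupling.ae_fst {E F : Type*} [MeasurableSpace E] [MeasurableSpace F]
    {γ : Measure (E × F)} {μ : Measure E} {ν : Measure F} (hγ : IsCoupling γ μ ν)
    {P : E → Prop} (h : ∀ᵐ x ∂μ, P x) : ∀ᵐ z ∂γ, P z.1 :=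
  ae_of_ae_map measurable_fst.aemeasurable (hγ.1 ▸ h)

lemma IsCoupling.ae_snd {E F : Type*} [MeasurableSpace E] [MeasurableSpace F]
    {γ : Measure (E × F)} {μ : Measure E} {ν : Measure F} (hγ : IsCoupling γ μ ν)
    {P : F → Prop} (h : ∀ᵐ y ∂ν, P y) : ∀ᵐ z ∂γ, P z.2 :=
  ae_of_ae_map measurable_snd.aemeasurable (hγ.2 ▸ h)

lemma msupport_eq_support {E : Type*} [MeasurableSpace E] [TopologicalSpace E]
    (μ : Measure E) : msupport μ = μ.support := by
  ext x
  simp [msupport, Measure.mem_support_iff_forall, pos_iff_ne_zero]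

lemma ae_mem_msupport {E : Type*} [MeasurableSpace E] [TopologicalSpace E]
    [HereditarilyLindelofSpace E] (μ : Measure E) : ∀ᵐ x ∂μ, x ∈ msupport μ := by
  rw [msupport_eq_support]
  exact Measure.support_mem_ae

lemma preimage_prodMap_singleton {X ι : Type*} (q : X → ι) (s : ι × ι) :
    Prod.map q q ⁻¹' {s} = (q ⁻¹' {s.1}) ×ˢ (q ⁻¹' {s.2}) := by
  ext z
  simp [Prod.ext_iff]

section BlockApprox

variable {X ι : Type*} [MeasurableSpace X] [MeasurableSpace ι] [MeasurableSingletonClass ι]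

/-- On the cell `q⁻¹{i} × q⁻¹{j}`, the block approximation of `γ` is `μ ⊗ ν` rescaled to carry
the same mass as `γ`. -/
def blockDensity (μ ν : Measure X) (γ : Measure (X × X)) (q : X → ι) (s : ι × ι) : ℝ≥0∞ :=
  γ (Prod.map q q ⁻¹' {s}) / (μ (q ⁻¹' {s.1}) * ν (q ⁻¹' {s.2}))

def blockApprox (μ ν : Measure X) (γ : Measure (X × X)) (q : X → ι) : Measure (X × X) :=
  (μ.prod ν).withDensity (blockDensity μ ν γ q ∘ Prod.map q q)

variable {μ ν : Measure X} {γ : Measure (X × X)} {q : X → ι}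

lemma measure_cell_le_fst (hq : Measurable q) (hγ : IsCoupling γ μ ν) (s : ι × ι) :
    γ (Prod.map q q ⁻¹' {s}) ≤ μ (q ⁻¹' {s.1}) := by
  rw [← hγ.1, Measure.map_apply measurable_fst (hq (measurableSet_singleton _))]
  exact measure_mono fun z hz => (Prod.ext_iff.1 hz).1

lemma measure_cell_le_snd (hq : Measurable q) (hγ : IsCoupling γ μ ν) (s : ι × ι) :
    γ (Prod.map q q ⁻¹' {s}) ≤ ν (q ⁻¹' {s.2}) := by
  rw [← hγ.2, Measure.map_apply measurable_snd (hq (measurableSet_singleton _))]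
  exact measure_mono fun z hz => (Prod.ext_iff.1 hz).2

lemma blockDensity_mul_measure_snd [IsFiniteMeasure ν] (hq : Measurable q)
    (hγ : IsCoupling γ μ ν) (s : ι × ι) :
    blockDensity μ ν γ q s * ν (q ⁻¹' {s.2}) = γ (Prod.map q q ⁻¹' {s}) / μ (q ⁻¹' {s.1}) := by
  by_cases h0 : ν (q ⁻¹' {s.2}) = 0
  · have : γ (Prod.map q q ⁻¹' {s}) = 0 := le_antisymm (h0 ▸ measure_cell_le_snd hq hγ s) bot_le
    rw [h0, mul_zero, this, ENNReal.zero_div]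
  · rw [blockDensity, ← ENNReal.mul_div_right_comm,
      ENNReal.mul_div_mul_right _ _ h0 (measure_ne_top _ _)]

lemma blockDensity_mul_measure_fst [IsFiniteMeasure μ] (hq : Measurable q)
    (hγ : IsCoupling γ μ ν) (s : ι × ι) :
    blockDensity μ ν γ q s * μ (q ⁻¹' {s.1}) = γ (Prod.map q q ⁻¹' {s}) / ν (q ⁻¹' {s.2}) := by
  by_cases h0 : μ (q ⁻¹' {s.1}) = 0
  · have : γ (Prod.map q q ⁻¹' {s}) = 0 := le_antisymm (h0 ▸ measure_cell_le_fst hq hγ s) bot_le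
    rw [h0, mul_zero, this, ENNReal.zero_div]
  · rw [blockDensity, mul_comm (μ _), ← ENNReal.mul_div_right_comm,
      ENNReal.mul_div_mul_right _ _ h0 (measure_ne_top _ _)]

lemma blockApprox_cell [IsFiniteMeasure μ] [IsFiniteMeasure ν] (hq : Measurable q)
    (hγ : IsCoupling γ μ ν) (s : ι × ι) :
    blockApprox μ ν γ q (Prod.map q q ⁻¹' {s}) = γ (Prod.map q q ⁻¹' {s}) := by
  have hs : MeasurableSet (Prod.map q q ⁻¹' {s}) := (hq.prodMap hq) (measurableSet_singleton _)
  rw [blockApprox, withDensity_apply _ hs,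
    setLIntegral_congr_fun hs fun z (hz : Prod.map q q z = s) => by rw [Function.comp, hz],
    setLIntegral_const, preimage_prodMap_singleton, Measure.prod_prod, ← mul_assoc,
    blockDensity_mul_measure_fst hq hγ, ← preimage_prodMap_singleton]
  rcases eq_or_ne (ν (q ⁻¹' {s.2})) 0 with h0 | h0
  · rw [h0, mul_zero, eq_comm]
    exact le_antisymm (h0 ▸ measure_cell_le_snd hq hγ s) bot_le
  · exact ENNReal.div_mul_cancel h0 (measure_ne_top _ _)

variable [Countable ι]

lemma tsum_measure_cell_fst (hq : Measurable q) (hγ : IsCoupling γ μ ν) (i : ι) :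
    ∑' j, γ (Prod.map q q ⁻¹' {(i, j)}) = μ (q ⁻¹' {i}) := by
  have hdisj : Pairwise (Function.onFun Disjoint fun j => Prod.map q q ⁻¹' {(i, j)}) :=
    fun j j' hjj' => (Set.disjoint_singleton.2 fun h => hjj' (Prod.ext_iff.1 h).2).preimage _
  rw [← measure_iUnion hdisj fun j => (hq.prodMap hq) (measurableSet_singleton _), ← hγ.1,
    Measure.map_apply measurable_fst (hq (measurableSet_singleton _))]
  congr 1
  ext z
  simp [Prod.ext_iff]

lemma tsum_measure_cell_snd (hq : Measurable q) (hγ : IsCoupling γ μ ν) (j : ι) :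
    ∑' i, γ (Prod.map q q ⁻¹' {(i, j)}) = ν (q ⁻¹' {j}) := by
  have hdisj : Pairwise (Function.onFun Disjoint fun i => Prod.map q q ⁻¹' {(i, j)}) :=
    fun i i' hii' => (Set.disjoint_singleton.2 fun h => hii' (Prod.ext_iff.1 h).1).preimage _
  rw [← measure_iUnion hdisj fun i => (hq.prodMap hq) (measurableSet_singleton _), ← hγ.2,
    Measure.map_apply measurable_snd (hq (measurableSet_singleton _))]
  congr 1
  ext z
  simp [Prod.ext_iff]

variable [IsFiniteMeasure μ] [IsFiniteMeasure ν]

lemma ae_lintegral_blockDensity_snd (hq : Measurable q) (hγ : IsCoupling γ μ ν) :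
    ∀ᵐ x ∂μ, ∫⁻ y, blockDensity μ ν γ q (q x, q y) ∂ν = 1 := by
  filter_upwards [ae_measure_preimage_singleton_ne_zero (f := q)] with x hx
  rw [← lintegral_map (f := fun j => blockDensity μ ν γ q (q x, j)) (measurable_of_countable _) hq,
    lintegral_countable']
  simp_rw [Measure.map_apply hq (measurableSet_singleton _),
    blockDensity_mul_measure_snd hq hγ (q x, _), div_eq_mul_inv]
  rw [ENNReal.tsum_mul_right, tsum_measure_cell_fst hq hγ,
    ENNReal.mul_inv_cancel hx (measure_ne_top _ _)]

lemma ae_lintegral_blockDensity_fst (hq : Measurable q) (hγ : IsCoupling γ μ ν) :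
    ∀ᵐ y ∂ν, ∫⁻ x, blockDensity μ ν γ q (q x, q y) ∂μ = 1 := by
  filter_upwards [ae_measure_preimage_singleton_ne_zero (f := q)] with y hy
  rw [← lintegral_map (f := fun i => blockDensity μ ν γ q (i, q y)) (measurable_of_countable _) hq,
    lintegral_countable']
  simp_rw [Measure.map_apply hq (measurableSet_singleton _),
    blockDensity_mul_measure_fst hq hγ (_, q y), div_eq_mul_inv]
  rw [ENNReal.tsum_mul_right, tsum_measure_cell_snd hq hγ,
    ENNReal.mul_inv_cancel hy (measure_ne_top _ _)]

lemma map_fst_blockApprox (hq : Measurable q) (hγ : IsCoupling γ μ ν) :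
    (blockApprox μ ν γ q).map Prod.fst = μ := by
  ext S hS
  rw [Measure.map_apply measurable_fst hS, ← Set.prod_univ, blockApprox,
    withDensity_apply _ (hS.prod MeasurableSet.univ), ← Measure.prod_restrict,
    Measure.restrict_univ,
    lintegral_prod _ ((measurable_of_countable _).comp (hq.prodMap hq)).aemeasurable]
  calc ∫⁻ x in S, ∫⁻ y, blockDensity μ ν γ q (q x, q y) ∂ν ∂μ = ∫⁻ x in S, 1 ∂μ :=
        lintegral_congr_ae (ae_restrict_of_ae (ae_lintegral_blockDensity_snd hq hγ))
    _ = μ S := setLIntegral_one S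

lemma map_snd_blockApprox (hq : Measurable q) (hγ : IsCoupling γ μ ν) :
    (blockApprox μ ν γ q).map Prod.snd = ν := by
  ext S hS
  rw [Measure.map_apply measurable_snd hS, ← Set.univ_prod, blockApprox,
    withDensity_apply _ (MeasurableSet.univ.prod hS), ← Measure.prod_restrict,
    Measure.restrict_univ,
    lintegral_prod_symm _ ((measurable_of_countable _).comp (hq.prodMap hq)).aemeasurable]
  calc ∫⁻ y in S, ∫⁻ x, blockDensity μ ν γ q (q x, q y) ∂μ ∂ν = ∫⁻ y in S, 1 ∂ν :=
        lintegral_congr_ae (ae_restrict_of_ae (ae_lintegral_blockDensity_fst hq hγ))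
    _ = ν S := setLIntegral_one S

lemma isCoupling_blockApprox (hq : Measurable q) (hγ : IsCoupling γ μ ν) :
    IsCoupling (blockApprox μ ν γ q) μ ν :=
  ⟨map_fst_blockApprox hq hγ, map_snd_blockApprox hq hγ⟩

lemma isProbabilityMeasure_blockApprox [IsProbabilityMeasure μ] (hq : Measurable q)
    (hγ : IsCoupling γ μ ν) : IsProbabilityMeasure (blockApprox μ ν γ q) := by
  refine ⟨?_⟩
  rw [← Set.preimage_univ (f := Prod.fst), ← Measure.map_apply measurable_fst .univ,
    map_fst_blockApprox hq hγ, measure_univ]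

lemma ae_blockApprox_measure_cell_ne_zero (hq : Measurable q) (hγ : IsCoupling γ μ ν) :
    ∀ᵐ z ∂blockApprox μ ν γ q, γ (Prod.map q q ⁻¹' {Prod.map q q z}) ≠ 0 := by
  filter_upwards [ae_measure_preimage_singleton_ne_zero (f := Prod.map q q)] with z hz
  rwa [blockApprox_cell hq hγ] at hz

lemma ae_blockApprox_exists_mem_cell (hq : Measurable q) (hγ : IsCoupling γ μ ν)
    {P : Set (X × X)} (hP : ∀ᵐ z ∂γ, z ∈ P) :
    ∀ᵐ z ∂blockApprox μ ν γ q, ∃ w ∈ P, Prod.map q q w = Prod.map q q z := by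
  filter_upwards [ae_blockApprox_measure_cell_ne_zero hq hγ] with z hz
  rw [← measure_inter_conull (mem_ae_iff.1 hP)] at hz
  obtain ⟨w, hw, hwP⟩ := nonempty_of_measure_ne_zero hz
  exact ⟨w, hwP, hw⟩

end BlockApprox

section BlockEntropy

variable {X ι : Type*} [MeasurableSpace X] [MeasurableSpace ι] [MeasurableSingletonClass ι]
  [Countable ι] {μ ν : Measure X} {γ : Measure (X × X)} {q : X → ι}

omit [Countable ι] in
lemma log_toReal_blockDensity_le [IsFiniteMeasure μ] [IsFiniteMeasure ν] (hq : Measurable q)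
    (hγ : IsCoupling γ μ ν) {s : ι × ι} (hs : γ (Prod.map q q ⁻¹' {s}) ≠ 0) :
    Real.log (blockDensity μ ν γ q s).toReal ≤ -Real.log (ν.real (q ⁻¹' {s.2})) := by
  have hwμ := ENNReal.toReal_mono (measure_ne_top _ _) (measure_cell_le_fst hq hγ s)
  have hwν := measure_cell_le_snd hq hγ s
  have hw : 0 < (γ (Prod.map q q ⁻¹' {s})).toReal :=
    ENNReal.toReal_pos hs (hwν.trans_lt (measure_lt_top _ _)).ne
  have hμ : 0 < (μ (q ⁻¹' {s.1})).toReal := hw.trans_le hwμ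
  have hν : 0 < (ν (q ⁻¹' {s.2})).toReal :=
    ENNReal.toReal_pos (fun h => hs (le_antisymm (h ▸ hwν) bot_le)) (measure_ne_top _ _)
  rw [← Real.log_inv, blockDensity, ENNReal.toReal_div, ENNReal.toReal_mul]
  refine Real.log_le_log (div_pos hw (mul_pos hμ hν)) ?_
  rw [div_le_iff₀ (mul_pos hμ hν), ← mul_assoc, measureReal_def, mul_right_comm,
    inv_mul_cancel₀ hν.ne', one_mul]
  exact hwμ

lemma llr_blockApprox_ae_eq [IsFiniteMeasure μ] [IsFiniteMeasure ν] (hq : Measurable q) :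
    llr (blockApprox μ ν γ q) (μ.prod ν) =ᵐ[blockApprox μ ν γ q]
      fun z => Real.log (blockDensity μ ν γ q (Prod.map q q z)).toReal := by
  have hrn := Measure.rnDeriv_withDensity (μ.prod ν)
    ((measurable_of_countable (blockDensity μ ν γ q)).comp (hq.prodMap hq))
  filter_upwards [(withDensity_absolutelyContinuous _ _).ae_le hrn] with z hz
  simp only [llr_def]
  rw [blockApprox, hz]
  rfl

lemma relEntropy_blockApprox_le [IsProbabilityMeasure μ] [IsProbabilityMeasure ν]
    (hq : Measurable q) (hγ : IsCoupling γ μ ν) (S : Finset ι) (hμS : ∀ᵐ x ∂μ, q x ∈ S)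
    (hνS : ∀ᵐ y ∂ν, q y ∈ S) :
    relEntropy (blockApprox μ ν γ q) (μ.prod ν) ≤ ENNReal.ofReal (Real.log S.card + 1) := by
  have hcpl := isCoupling_blockApprox hq hγ
  have := isProbabilityMeasure_blockApprox hq hγ
  have hS₁ : ∀ᵐ z ∂blockApprox μ ν γ q, q z.1 ∈ S := hcpl.ae_fst (P := (q · ∈ S)) hμS
  have hS₂ : ∀ᵐ z ∂blockApprox μ ν γ q, q z.2 ∈ S := hcpl.ae_snd (P := (q · ∈ S)) hνS
  have hSS : ∀ᵐ z ∂blockApprox μ ν γ q, Prod.map q q z ∈ S ×ˢ S := by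
    filter_upwards [hS₁, hS₂] with z h1 h2
    exact Finset.mem_product.2 ⟨h1, h2⟩
  have hllr := llr_blockApprox_ae_eq (μ := μ) (ν := ν) (γ := γ) hq
  have hint : Integrable (llr (blockApprox μ ν γ q) (μ.prod ν)) (blockApprox μ ν γ q) :=
    (integrable_comp_of_ae_mem_finset (hq.prodMap hq)
      (fun s => Real.log (blockDensity μ ν γ q s).toReal) _ hSS).congr hllr.symm
  rw [relEntropy, if_pos ⟨withDensity_absolutelyContinuous _ _, hint⟩]
  refine ENNReal.ofReal_le_ofReal ?_
  -- the density is at most `1 / ν(cell of y)`, so the entropy is bounded by that of `q_* ν`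
  set φ : ι → ℝ := fun j => -Real.log (ν.real (q ⁻¹' {j}))
  have hφ : Integrable φ (ν.map q) := by
    rw [integrable_map_measure (measurable_of_countable φ).aestronglyMeasurable hq.aemeasurable]
    exact integrable_comp_of_ae_mem_finset hq φ S hνS
  calc ∫ z, llr (blockApprox μ ν γ q) (μ.prod ν) z ∂blockApprox μ ν γ q
      ≤ ∫ z, φ (q z.2) ∂blockApprox μ ν γ q := by
        refine integral_mono_ae hint
          (integrable_comp_of_ae_mem_finset (hq.comp measurable_snd) φ S hS₂) ?_
        filter_upwards [hllr, ae_blockApprox_measure_cell_ne_zero hq hγ] with z h1 h2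
        rw [h1]
        exact log_toReal_blockDensity_le hq hγ h2
    _ = ∫ j, φ j ∂ν.map q := by
        have hmap : (blockApprox μ ν γ q).map (q ∘ Prod.snd) = ν.map q := by
          rw [← Measure.map_map hq measurable_snd, hcpl.2]
        rw [← hmap, integral_map (hq.comp measurable_snd).aemeasurable
          (measurable_of_countable φ).aestronglyMeasurable]
        rfl
    _ = ∑ j ∈ S, Real.negMulLog (ν.real (q ⁻¹' {j})) := by
        rw [integral_countable hφ, tsum_eq_sum (s := S)]
        · refine Finset.sum_congr rfl fun j _ => ?_
          rw [map_measureReal_apply hq (measurableSet_singleton j), smul_eq_mul, Real.negMulLog]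
          ring
        · intro j hj
          have h0 : ν (q ⁻¹' {j}) = 0 := measure_mono_null (fun y (hy : q y = j) =>
            show q y ∉ S by rwa [hy]) (ae_iff.1 hνS)
          rw [map_measureReal_apply hq (measurableSet_singleton j), measureReal_def, h0]
          simp
    _ ≤ Real.log S.card + 1 := by
        refine Real.sum_negMulLog_le_log_card_add_one S _ (fun _ _ => measureReal_nonneg) ?_
        rw [sum_measureReal_preimage_singleton S fun j _ => hq (measurableSet_singleton j)]
        exact measureReal_le_one

end BlockEntropy

lemma ae_le_of_holder_of_cell_dist_le {X ι : Type*} [PseudoMetricSpace X] [MeasurableSpace X]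
    [MeasurableSpace ι] [MeasurableSingletonClass ι] [Countable ι] {μ ν : Measure X}
    [IsFiniteMeasure μ] [IsFiniteMeasure ν] {γ : Measure (X × X)} {q : X → ι}
    (hq : Measurable q) (hγ : IsCoupling γ μ ν) {δ : ℝ} (hδ : ∀ x y, q x = q y → dist x y ≤ δ)
    {c : X × X → ℝ} {A α t : ℝ} (hA : 0 ≤ A) (hα : 0 ≤ α)
    (hHolder : ∀ z w, |c z - c w| ≤ A * dist z w ^ α) (hct : ∀ᵐ z ∂γ, c z ≤ t) :
    ∀ᵐ z ∂blockApprox μ ν γ q, c z ≤ t + A * δ ^ α := by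
  filter_upwards [ae_blockApprox_exists_mem_cell hq hγ (P := {z | c z ≤ t}) hct]
    with z ⟨w, (hw : c w ≤ t), hwz⟩
  have hdist : dist z w ≤ δ := by
    rw [Prod.dist_eq]
    exact max_le (hδ _ _ congr(($hwz).1).symm) (hδ _ _ congr(($hwz).2).symm)
  calc c z ≤ c w + |c z - c w| := by linarith [le_abs_self (c z - c w)]
    _ ≤ t + A * δ ^ α := add_le_add hw <| (hHolder z w).trans <|
        mul_le_mul_of_nonneg_left (Real.rpow_le_rpow dist_nonneg hdist hα) hA

section Cubes

variable {d : ℕ}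

def cubeIndex (h : ℝ) (x : Rd d) : Fin d → ℤ := fun k => ⌊x k / h⌋

def cubeBox (d : ℕ) (h R : ℝ) : Finset (Fin d → ℤ) :=
  Fintype.piFinset fun _ => Finset.Icc ⌊-R / h⌋ ⌊R / h⌋

lemma measurable_cubeIndex (h : ℝ) : Measurable (cubeIndex (d := d) h) :=
  measurable_pi_lambda _ fun k =>
    (((measurable_pi_apply k).comp (WithLp.measurable_ofLp 2 (Fin d → ℝ))).div_const h).floor

lemma dist_le_of_cubeIndex_eq {h : ℝ} (hh : 0 < h) {x y : Rd d}
    (hxy : cubeIndex h x = cubeIndex h y) : dist x y ≤ h * √d := by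
  have hk : ∀ k, dist (x k) (y k) ≤ h := fun k => by
    have := Int.abs_sub_lt_one_of_floor_eq_floor (congrFun hxy k)
    rw [← sub_div, abs_div, abs_of_pos hh, div_lt_one hh] at this
    exact this.le
  calc dist x y = √(∑ k, dist (x k) (y k) ^ 2) := EuclideanSpace.dist_eq x y
    _ ≤ √(∑ _k : Fin d, h ^ 2) := Real.sqrt_le_sqrt <|
        Finset.sum_le_sum fun k _ => pow_le_pow_left₀ dist_nonneg (hk k) 2
    _ = h * √d := by
        rw [Finset.sum_const, Finset.card_univ, Fintype.card_fin, nsmul_eq_mul,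
          Real.sqrt_mul' _ (sq_nonneg h), Real.sqrt_sq hh.le, mul_comm]

lemma cubeIndex_mem_cubeBox {h R : ℝ} (hh : 0 < h) {x : Rd d} (hx : ‖x‖ ≤ R) :
    cubeIndex h x ∈ cubeBox d h R := by
  refine Fintype.mem_piFinset.2 fun k => Finset.mem_Icc.2 ⟨?_, ?_⟩
  all_goals
    have hxk : |x k| ≤ R := (Real.norm_eq_abs _ ▸ PiLp.norm_apply_le x k).trans hx
    refine Int.floor_mono (div_le_div_of_nonneg_right ?_ hh.le)
  · exact neg_le_of_abs_le hxk
  · exact le_of_abs_le hxk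

lemma log_card_cubeBox_le {h R : ℝ} (hh : 0 < h) (hh1 : h ≤ 1) (hR : 0 ≤ R) :
    Real.log (cubeBox d h R).card ≤ d * (Real.log (2 * R + 2) - Real.log h) := by
  have hIcc : ((Finset.Icc ⌊-R / h⌋ ⌊R / h⌋).card : ℝ) ≤ (2 * R + 2) / h := by
    have hle : ⌊-R / h⌋ ≤ ⌊R / h⌋ + 1 :=
      (Int.floor_mono (div_le_div_of_nonneg_right (by linarith) hh.le)).trans (by omega)
    rw [Int.card_Icc, ← Int.cast_natCast, Int.toNat_of_nonneg (by omega)]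
    push_cast
    have h2 : 2 ≤ 2 / h := by rw [le_div_iff₀ hh]; linarith
    linarith [Int.floor_le (R / h), Int.sub_one_lt_floor (-R / h), neg_div h R,
      add_div (2 * R) 2 h, mul_div_assoc 2 R h]
  rcases Nat.eq_zero_or_pos (cubeBox d h R).card with h0 | hpos
  · rw [h0, Nat.cast_zero, Real.log_zero]
    exact mul_nonneg d.cast_nonneg (sub_nonneg.2 (Real.log_le_log hh (by linarith)))
  rw [← Real.log_div (by linarith) hh.ne', ← Real.log_pow]
  refine Real.log_le_log (by exact_mod_cast hpos) ?_
  rw [cubeBox, Fintype.card_piFinset, Finset.prod_const, Finset.card_univ, Fintype.card_fin]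
  push_cast
  exact pow_le_pow_left₀ (Nat.cast_nonneg _) hIcc d

lemma ae_cubeIndex_mem_cubeBox (μ : Measure (Rd d)) {h R : ℝ} (hh : 0 < h)
    (hR : msupport μ ⊆ Metric.closedBall 0 R) : ∀ᵐ x ∂μ, cubeIndex h x ∈ cubeBox d h R := by
  filter_upwards [ae_mem_msupport μ] with x hx
  exact cubeIndex_mem_cubeBox hh (mem_closedBall_zero_iff.1 (hR hx))

end Cubes

section Values

variable {d : ℕ} {c : Rd d × Rd d → ℝ} {μ ν : Measure (Rd d)}

lemma isCoupling_prod (μ ν : Measure (Rd d)) [IsProbabilityMeasure μ] [IsProbabilityMeasure ν] :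
    IsCoupling (μ.prod ν) μ ν :=
  ⟨by simp, by simp⟩

lemma vInfty_le_Jinf {γ : Measure (Rd d × Rd d)} [IsProbabilityMeasure γ]
    (hγ : IsCoupling γ μ ν) : vInfty c μ ν ≤ Jinf c μ ν γ :=
  iInf_le_of_le γ (iInf_le_of_le inferInstance (iInf_le _ hγ))

lemma vP_le_Jpe {γ : Measure (Rd d × Rd d)} [IsProbabilityMeasure γ] (hγ : IsCoupling γ μ ν)
    (p : ℝ) : vP c μ ν p ≤ Jpe c μ ν p 1 γ :=
  iInf_le_of_le γ (iInf_le_of_le inferInstance (iInf_le _ hγ))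

lemma vInfty_ne_top [IsProbabilityMeasure μ] [IsProbabilityMeasure ν] (hc : Continuous c)
    (hμ : IsCompact (msupport μ)) (hν : IsCompact (msupport ν)) : vInfty c μ ν ≠ ⊤ := by
  obtain ⟨C, hC⟩ := (hμ.prod hν).exists_bound_of_continuousOn hc.continuousOn
  have hprod := isCoupling_prod μ ν
  refine ne_top_of_le_ne_top (ENNReal.ofReal_ne_top (r := C)) ((vInfty_le_Jinf hprod).trans ?_)
  rw [Jinf, if_pos hprod]
  refine essSup_le_of_ae_le _ ?_
  filter_upwards [hprod.ae_fst (ae_mem_msupport μ), hprod.ae_snd (ae_mem_msupport ν)]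
    with z h1 h2
  exact ENNReal.ofReal_le_ofReal ((le_abs_self _).trans (hC z ⟨h1, h2⟩))

lemma exists_coupling_ae_le_vInfty_add (hfin : vInfty c μ ν ≠ ⊤) {ε : ℝ} (hε : 0 < ε) :
    ∃ γ : Measure (Rd d × Rd d), IsProbabilityMeasure γ ∧ IsCoupling γ μ ν ∧
      ∀ᵐ z ∂γ, c z ≤ (vInfty c μ ν).toReal + ε := by
  have hlt : vInfty c μ ν < ENNReal.ofReal ((vInfty c μ ν).toReal + ε) := by
    rw [ENNReal.ofReal_add ENNReal.toReal_nonneg hε.le, ENNReal.ofReal_toReal hfin]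
    exact ENNReal.lt_add_right hfin (ENNReal.ofReal_pos.2 hε).ne'
  obtain ⟨γ, hγ⟩ := iInf_lt_iff.1 hlt
  obtain ⟨hprob, hγ⟩ := iInf_lt_iff.1 hγ
  obtain ⟨hcpl, hγ⟩ := iInf_lt_iff.1 hγ
  refine ⟨γ, hprob, hcpl, ?_⟩
  rw [Jinf, if_pos hcpl] at hγ
  filter_upwards [ae_le_essSup (fun z => ENNReal.ofReal (c z))] with z hz
  exact (ENNReal.ofReal_le_ofReal_iff (by positivity)).1 (hz.trans hγ.le)

lemma vP_le_of_ae_le {γ : Measure (Rd d × Rd d)} [IsProbabilityMeasure γ]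
    (hγ : IsCoupling γ μ ν) (hc0 : ∀ z, 0 ≤ c z) {p a E : ℝ} (hp : 0 < p) (ha : 0 ≤ a)
    (hE : 0 ≤ E) (hca : ∀ᵐ z ∂γ, c z ≤ a) (hent : relEntropy γ (μ.prod ν) ≤ ENNReal.ofReal E) :
    vP c μ ν p ≤ ENNReal.ofReal ((a ^ p + E) ^ (1 / p)) := by
  refine (vP_le_Jpe hγ p).trans ?_
  rw [Jpe, if_pos hγ, ENNReal.ofReal_one, one_mul,
    ← ENNReal.ofReal_rpow_of_nonneg (by positivity) (by positivity),
    ENNReal.ofReal_add (by positivity) hE]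
  refine ENNReal.rpow_le_rpow (add_le_add ?_ hent) (by positivity)
  calc ∫⁻ z, ENNReal.ofReal (c z ^ p) ∂γ ≤ ∫⁻ _, ENNReal.ofReal (a ^ p) ∂γ := by
        refine lintegral_mono_ae ?_
        filter_upwards [hca] with z hz
        exact ENNReal.ofReal_le_ofReal (Real.rpow_le_rpow (hc0 z) hz hp.le)
    _ = ENNReal.ofReal (a ^ p) := by simp

end Values

lemma vP_le_of_cube_scale {d : ℕ} {c : Rd d × Rd d → ℝ} (hc0 : ∀ z, 0 ≤ c z) {A α : ℝ}
    (hA : 0 ≤ A) (hα : 0 ≤ α) (hHolder : ∀ z w : Rd d × Rd d, |c z - c w| ≤ A * dist z w ^ α)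
    {μ ν : Measure (Rd d)} [IsProbabilityMeasure μ] [IsProbabilityMeasure ν]
    (hfin : vInfty c μ ν ≠ ⊤) {R : ℝ} (hR : 0 ≤ R) (hμR : msupport μ ⊆ Metric.closedBall 0 R)
    (hνR : msupport ν ⊆ Metric.closedBall 0 R) {p h ε : ℝ} (hp : 0 < p) (hh : 0 < h)
    (hh1 : h ≤ 1) (hε : 0 < ε) :
    vP c μ ν p ≤ ENNReal.ofReal ((((vInfty c μ ν).toReal + ε + A * (h * √d) ^ α) ^ p +
      (d * (Real.log (2 * R + 2) - Real.log h) + 1)) ^ (1 / p)) := by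
  obtain ⟨γ, -, hγ, hcγ⟩ := exists_coupling_ae_le_vInfty_add hfin hε
  have hq := measurable_cubeIndex (d := d) h
  have := isProbabilityMeasure_blockApprox hq hγ
  have hlog : 0 ≤ Real.log (2 * R + 2) - Real.log h :=
    sub_nonneg.2 (Real.log_le_log hh (by linarith))
  refine vP_le_of_ae_le (isCoupling_blockApprox hq hγ) hc0 hp (by positivity) (by positivity)
    (ae_le_of_holder_of_cell_dist_le hq hγ (fun _ _ => dist_le_of_cubeIndex_eq hh) hA hα
      hHolder hcγ) ?_
  refine (relEntropy_blockApprox_le hq hγ _ (ae_cubeIndex_mem_cubeBox μ hh hμR)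
    (ae_cubeIndex_mem_cubeBox ν hh hνR)).trans (ENNReal.ofReal_le_ofReal ?_)
  linarith [log_card_cubeBox_le (d := d) hh hh1 hR]

/-- (Upper bound on the speed of convergence, λ > 0) If c is α-Hölder and v_∞ ≥ 1+λ with λ > 0,
    then v_p − v_∞ ≤ B·e^{−βp} eventually, with β = min{α, log(1+λ)}. -/
theorem speed_upper_bound_pos {d : ℕ} (c : Rd d × Rd d → ℝ) (hc : Continuous c)
    (hc0 : ∀ z, 0 ≤ c z)
    (α : ℝ) (hα : α ∈ Set.Ioc (0 : ℝ) 1)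
    (A : ℝ) (hA : 0 ≤ A) (hHolder : ∀ z w : Rd d × Rd d, |c z - c w| ≤ A * dist z w ^ α)
    (μ ν : Measure (Rd d)) [IsProbabilityMeasure μ] [IsProbabilityMeasure ν]
    (hμ : IsCompact (msupport μ)) (hν : IsCompact (msupport ν))
    (lam : ℝ) (hlam : 0 < lam) (hvinf : ENNReal.ofReal (1 + lam) ≤ vInfty c μ ν) :
    ∃ B > (0 : ℝ), ∃ p₀ : ℝ, 1 ≤ p₀ ∧ ∀ p ≥ p₀,
      vP c μ ν p ≤ vInfty c μ ν +
        ENNReal.ofReal (B * Real.exp (-(min α (Real.log (1 + lam))) * p)) := by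
  obtain ⟨R, hR, hRball⟩ := (hμ.union hν).isBounded.subset_closedBall_lt 0 0
  have hfin := vInfty_ne_top hc hμ hν
  have hM : 1 + lam ≤ (vInfty c μ ν).toReal := by
    simpa [ENNReal.toReal_ofReal (by linarith : 0 ≤ 1 + lam)] using ENNReal.toReal_mono hfin hvinf
  set C₁ : ℝ := d * Real.log (2 * R + 2) + 1
  set C₂ : ℝ := 1 + A * √d ^ α
  have hC₁ : 0 ≤ C₁ := by have := Real.log_nonneg (by linarith : (1 : ℝ) ≤ 2 * R + 2); positivity
  refine ⟨C₂ + (C₁ + d) * (1 + lam), by positivity, 1, le_rfl, fun p hp => ?_⟩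
  -- cubes of side `e^{-p}` and a coupling `e^{-αp}`-close to optimal for `J_∞`
  have hv := vP_le_of_cube_scale hc0 hA hα.1.le hHolder hfin hR.le
    (Set.subset_union_left.trans hRball) (Set.subset_union_right.trans hRball) (by linarith)
    (Real.exp_pos (-p)) (Real.exp_le_one_iff.2 (by linarith)) (Real.exp_pos (-(α * p)))
  have ha : (vInfty c μ ν).toReal + Real.exp (-(α * p)) + A * (Real.exp (-p) * √d) ^ α
      = (vInfty c μ ν).toReal + C₂ * Real.exp (-(α * p)) := by
    rw [Real.mul_rpow (Real.exp_pos _).le (Real.sqrt_nonneg _), ← Real.exp_mul,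
      show -p * α = -(α * p) by ring]
    ring
  have hE : d * (Real.log (2 * R + 2) - Real.log (Real.exp (-p))) + 1 = C₁ + d * p := by
    rw [Real.log_exp]
    ring
  rw [ha, hE] at hv
  rw [← ENNReal.ofReal_toReal hfin, ← ENNReal.ofReal_add ENNReal.toReal_nonneg (by positivity)]
  exact hv.trans <| ENNReal.ofReal_le_ofReal <| Real.rpow_add_one_div_le_add_mul_exp
    (by linarith) hM hC₁ (by positivity) d.cast_nonneg hp
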